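/- arXiv:1801.07139 — 5 statements merged into one kernel-verified Lean document; each statement's English description precedes it below -/
import Mathlib

section
/- Fix real parameters α, β ≥ 0 and a. Let u, l, π : ℝ × ℝ → ℝ be smooth functions, u = u(x,t), l = l(x,t), π = π(x,t), with l_x(x,t) ≠ 0 for all (x,t). Assume that at every point: (i) αu − β u_xx = −π l_x + (a/2) ∂_x(l_xx/l_x); (ii) l_t + u l_x = 0; (iii) π_t + ∂_x(π u − (a/2) u_xx/l_x) = 0. Then u satisfies the family of equations α(u_t + 3 u u_x) − β(u_xxt + 2 u_x u_xx + u u_xxx) + a u_xxx = 0 at every point. -/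
/-- Partial derivative in the first (spatial) variable. -/
noncomputable def px (f : ℝ → ℝ → ℝ) : ℝ → ℝ → ℝ := fun x t => deriv (fun y => f y t) x
/-- Partial derivative in the second (time) variable. -/
noncomputable def pt (f : ℝ → ℝ → ℝ) : ℝ → ℝ → ℝ := fun x t => deriv (fun s => f x s) t

namespace ClebschAux

abbrev unc (f : ℝ → ℝ → ℝ) : ℝ × ℝ → ℝ := fun p => f p.1 p.2

theorem hasDerivAt_sliceX {E : Type*} [NormedAddCommGroup E] [NormedSpace ℝ E]
    {g : ℝ × ℝ → E} {x t : ℝ} (hg : DifferentiableAt ℝ g (x, t)) :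
    HasDerivAt (fun y => g (y, t)) (fderiv ℝ g (x, t) (1, 0)) x :=
  hg.hasFDerivAt.comp_hasDerivAt x (HasDerivAt.prodMk (hasDerivAt_id x) (hasDerivAt_const x t))

theorem hasDerivAt_sliceT {E : Type*} [NormedAddCommGroup E] [NormedSpace ℝ E]
    {g : ℝ × ℝ → E} {x t : ℝ} (hg : DifferentiableAt ℝ g (x, t)) :
    HasDerivAt (fun s => g (x, s)) (fderiv ℝ g (x, t) (0, 1)) t :=
  hg.hasFDerivAt.comp_hasDerivAt t (HasDerivAt.prodMk (hasDerivAt_const t x) (hasDerivAt_id t))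

theorem px_eq_fderiv {f : ℝ → ℝ → ℝ} (hf : Differentiable ℝ (unc f)) (x t : ℝ) :
    px f x t = fderiv ℝ (unc f) (x, t) (1, 0) :=
  (hasDerivAt_sliceX (hf (x, t))).deriv

theorem pt_eq_fderiv {f : ℝ → ℝ → ℝ} (hf : Differentiable ℝ (unc f)) (x t : ℝ) :
    pt f x t = fderiv ℝ (unc f) (x, t) (0, 1) :=
  (hasDerivAt_sliceT (hf (x, t))).deriv

theorem contDiff_px {f : ℝ → ℝ → ℝ} (hf : ContDiff ℝ (⊤ : ℕ∞) (unc f)) :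
    ContDiff ℝ (⊤ : ℕ∞) (unc (px f)) := by
  have h : unc (px f) = fun p => fderiv ℝ (unc f) p ((1 : ℝ), (0 : ℝ)) := by
    funext p
    simpa using px_eq_fderiv (hf.differentiable (by simp)) p.1 p.2
  rw [h]
  exact (hf.fderiv_right (by simp)).clm_apply contDiff_const

theorem diffX {f : ℝ → ℝ → ℝ} (hf : ContDiff ℝ (⊤ : ℕ∞) (unc f)) (x t : ℝ) :
    DifferentiableAt ℝ (fun y => f y t) x :=
  (hasDerivAt_sliceX ((hf.differentiable (by simp)) (x, t))).differentiableAt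

theorem diffT {f : ℝ → ℝ → ℝ} (hf : ContDiff ℝ (⊤ : ℕ∞) (unc f)) (x t : ℝ) :
    DifferentiableAt ℝ (fun s => f x s) t :=
  (hasDerivAt_sliceT ((hf.differentiable (by simp)) (x, t))).differentiableAt

theorem pt_px_comm {f : ℝ → ℝ → ℝ} (hf : ContDiff ℝ (⊤ : ℕ∞) (unc f)) (x t : ℝ) :
    pt (px f) x t = px (pt f) x t := by
  have hdF : Differentiable ℝ (unc f) := hf.differentiable (by simp)
  have hF'c : ContDiff ℝ (⊤ : ℕ∞) (fderiv ℝ (unc f)) := hf.fderiv_right (by simp)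
  have hdF' : Differentiable ℝ (fderiv ℝ (unc f)) := hF'c.differentiable (by simp)
  have hsymm :=
    second_derivative_symmetric (f := unc f) (f' := fderiv ℝ (unc f))
      (fun y => (hdF y).hasFDerivAt) ((hdF' (x, t)).hasFDerivAt) ((1 : ℝ), (0 : ℝ)) (0, 1)
  have d1 : HasDerivAt (fun s => fderiv ℝ (unc f) (x, s) ((1 : ℝ), (0 : ℝ)))
      (fderiv ℝ (fderiv ℝ (unc f)) (x, t) (0, 1) (1, 0)) t :=
    (ContinuousLinearMap.apply ℝ ℝ ((1 : ℝ), (0 : ℝ))).hasFDerivAt.comp_hasDerivAt t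
      (hasDerivAt_sliceT (hdF' (x, t)))
  have d2 : HasDerivAt (fun y => fderiv ℝ (unc f) (y, t) ((0 : ℝ), (1 : ℝ)))
      (fderiv ℝ (fderiv ℝ (unc f)) (x, t) (1, 0) (0, 1)) x :=
    (ContinuousLinearMap.apply ℝ ℝ ((0 : ℝ), (1 : ℝ))).hasFDerivAt.comp_hasDerivAt x
      (hasDerivAt_sliceX (hdF' (x, t)))
  calc pt (px f) x t = deriv (fun s => px f x s) t := rfl
    _ = deriv (fun s => fderiv ℝ (unc f) (x, s) ((1 : ℝ), (0 : ℝ))) t := by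
        congr 1; funext s; exact px_eq_fderiv hdF x s
    _ = fderiv ℝ (fderiv ℝ (unc f)) (x, t) (0, 1) (1, 0) := d1.deriv
    _ = fderiv ℝ (fderiv ℝ (unc f)) (x, t) (1, 0) (0, 1) := (hsymm).symm
    _ = deriv (fun y => fderiv ℝ (unc f) (y, t) ((0 : ℝ), (1 : ℝ))) x := d2.deriv.symm
    _ = deriv (fun y => pt f y t) x := by
        congr 1; funext y; exact (pt_eq_fderiv hdF y t).symm
    _ = px (pt f) x t := rfl

theorem px_congr {f g : ℝ → ℝ → ℝ} (h : ∀ x t, f x t = g x t) (x t : ℝ) :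
    px f x t = px g x t := by
  unfold px; congr 1; funext y; exact h y t

theorem pt_congr {f g : ℝ → ℝ → ℝ} (h : ∀ x t, f x t = g x t) (x t : ℝ) :
    pt f x t = pt g x t := by
  unfold pt; congr 1; funext s; exact h x s

theorem px_mul (f g : ℝ → ℝ → ℝ) {x t : ℝ} (hf : DifferentiableAt ℝ (fun y => f y t) x)
    (hg : DifferentiableAt ℝ (fun y => g y t) x) :
    px (fun x t => f x t * g x t) x t = px f x t * g x t + f x t * px g x t :=
  deriv_mul hf hg

theorem pt_mul (f g : ℝ → ℝ → ℝ) {x t : ℝ} (hf : DifferentiableAt ℝ (fun s => f x s) t)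
    (hg : DifferentiableAt ℝ (fun s => g x s) t) :
    pt (fun x t => f x t * g x t) x t = pt f x t * g x t + f x t * pt g x t :=
  deriv_mul hf hg

theorem px_add (f g : ℝ → ℝ → ℝ) {x t : ℝ} (hf : DifferentiableAt ℝ (fun y => f y t) x)
    (hg : DifferentiableAt ℝ (fun y => g y t) x) :
    px (fun x t => f x t + g x t) x t = px f x t + px g x t :=
  deriv_add hf hg

theorem pt_add (f g : ℝ → ℝ → ℝ) {x t : ℝ} (hf : DifferentiableAt ℝ (fun s => f x s) t)
    (hg : DifferentiableAt ℝ (fun s => g x s) t) :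
    pt (fun x t => f x t + g x t) x t = pt f x t + pt g x t :=
  deriv_add hf hg

theorem px_sub (f g : ℝ → ℝ → ℝ) {x t : ℝ} (hf : DifferentiableAt ℝ (fun y => f y t) x)
    (hg : DifferentiableAt ℝ (fun y => g y t) x) :
    px (fun x t => f x t - g x t) x t = px f x t - px g x t :=
  deriv_sub hf hg

theorem pt_sub (f g : ℝ → ℝ → ℝ) {x t : ℝ} (hf : DifferentiableAt ℝ (fun s => f x s) t)
    (hg : DifferentiableAt ℝ (fun s => g x s) t) :
    pt (fun x t => f x t - g x t) x t = pt f x t - pt g x t :=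
  deriv_sub hf hg

theorem px_neg (f : ℝ → ℝ → ℝ) (x t : ℝ) :
    px (fun x t => -f x t) x t = -px f x t :=
  deriv.neg

theorem pt_neg (f : ℝ → ℝ → ℝ) (x t : ℝ) :
    pt (fun x t => -f x t) x t = -pt f x t :=
  deriv.neg

theorem px_const_mul (c : ℝ) (f : ℝ → ℝ → ℝ) (x t : ℝ) :
    px (fun x t => c * f x t) x t = c * px f x t :=
  deriv_const_mul_field c

theorem pt_const_mul (c : ℝ) (f : ℝ → ℝ → ℝ) (x t : ℝ) :
    pt (fun x t => c * f x t) x t = c * pt f x t :=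
  deriv_const_mul_field c

theorem px_div (f g : ℝ → ℝ → ℝ) {x t : ℝ} (hf : DifferentiableAt ℝ (fun y => f y t) x)
    (hg : DifferentiableAt ℝ (fun y => g y t) x) (hne : g x t ≠ 0) :
    px (fun x t => f x t / g x t) x t
      = (px f x t * g x t - f x t * px g x t) / (g x t) ^ 2 :=
  deriv_div hf hg hne

theorem pt_div (f g : ℝ → ℝ → ℝ) {x t : ℝ} (hf : DifferentiableAt ℝ (fun s => f x s) t)
    (hg : DifferentiableAt ℝ (fun s => g x s) t) (hne : g x t ≠ 0) :
    pt (fun x t => f x t / g x t) x t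
      = (pt f x t * g x t - f x t * pt g x t) / (g x t) ^ 2 :=
  deriv_div hf hg hne

end ClebschAux
/-- If smooth `u, l, π` (with `l_x` nowhere vanishing) satisfy the Clebsch system
(i) `αu − βu_xx = −π l_x + (a/2)∂_x(l_xx/l_x)`, (ii) `l_t + u l_x = 0`,
(iii) `π_t + ∂_x(πu − (a/2)u_xx/l_x) = 0`, then `u` satisfies the family
`α(u_t + 3uu_x) − β(u_xxt + 2u_xu_xx + uu_xxx) + a u_xxx = 0`. -/
theorem stmt1 (α β a : ℝ) (hα : 0 ≤ α) (hβ : 0 ≤ β)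
    (u l pr : ℝ → ℝ → ℝ)
    (hu : ContDiff ℝ (⊤ : ℕ∞) (fun p : ℝ × ℝ => u p.1 p.2))
    (hl : ContDiff ℝ (⊤ : ℕ∞) (fun p : ℝ × ℝ => l p.1 p.2))
    (hpr : ContDiff ℝ (⊤ : ℕ∞) (fun p : ℝ × ℝ => pr p.1 p.2))
    (hlx : ∀ x t : ℝ, px l x t ≠ 0)
    (h1 : ∀ x t : ℝ, α * u x t - β * px (px u) x t
        = -(pr x t) * px l x t + (a / 2) * px (fun x t => px (px l) x t / px l x t) x t)
    (h2 : ∀ x t : ℝ, pt l x t + u x t * px l x t = 0)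
    (h3 : ∀ x t : ℝ, pt pr x t
        + px (fun x t => pr x t * u x t - (a / 2) * px (px u) x t / px l x t) x t = 0) :
    ∀ x t : ℝ,
      α * (pt u x t + 3 * u x t * px u x t)
        - β * (pt (px (px u)) x t + 2 * px u x t * px (px u) x t
            + u x t * px (px (px u)) x t)
        + a * px (px (px u)) x t = 0 := by
  open ClebschAux in
  have hu1 := contDiff_px hu
  have hu2 := contDiff_px hu1
  have hu3 := contDiff_px hu2
  have hl1 := contDiff_px hl
  have hl2 := contDiff_px hl1
  have hl3 := contDiff_px hl2
  have hp1 := contDiff_px hpr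
  have hlx' : ∀ p : ℝ × ℝ, px l p.1 p.2 ≠ 0 := fun p => hlx p.1 p.2
  have hq : ContDiff ℝ (⊤ : ℕ∞) (unc (fun x t => px (px l) x t / px l x t)) :=
    hl2.div hl1 hlx'
  have hq1 := contDiff_px hq
  -- (1) pt l = -(u l_x)
  have C1 : ∀ x t, pt l x t = -(u x t * px l x t) := fun x t => by
    have := h2 x t; linarith
  -- (2) pt l_x
  have C2 : ∀ x t, pt (px l) x t = -(px u x t * px l x t + u x t * px (px l) x t) := by
    intro x t
    have e1 : pt (px l) x t = px (pt l) x t := pt_px_comm hl x t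
    have e2 : px (pt l) x t = px (fun x t => -(u x t * px l x t)) x t := px_congr C1 x t
    have e3 : px (fun x t => -(u x t * px l x t)) x t
        = -(px (fun x t => u x t * px l x t) x t) :=
      px_neg (fun x t => u x t * px l x t) x t
    have e4 : px (fun x t => u x t * px l x t) x t
        = px u x t * px l x t + u x t * px (px l) x t :=
      px_mul u (px l) (diffX hu x t) (diffX hl1 x t)
    rw [e1, e2, e3, e4]
  -- (3) pt l_xx
  have C3 : ∀ x t, pt (px (px l)) x t
      = -((px (px u) x t * px l x t + px u x t * px (px l) x t)
          + (px u x t * px (px l) x t + u x t * px (px (px l)) x t)) := by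
    intro x t
    have e1 : pt (px (px l)) x t = px (pt (px l)) x t := pt_px_comm hl1 x t
    have e2 : px (pt (px l)) x t
        = px (fun x t => -(px u x t * px l x t + u x t * px (px l) x t)) x t :=
      px_congr C2 x t
    have e3 : px (fun x t => -(px u x t * px l x t + u x t * px (px l) x t)) x t
        = -(px (fun x t => px u x t * px l x t + u x t * px (px l) x t) x t) :=
      px_neg _ x t
    have e4 : px (fun x t => px u x t * px l x t + u x t * px (px l) x t) x t
        = px (fun x t => px u x t * px l x t) x t
          + px (fun x t => u x t * px (px l) x t) x t :=
      px_add _ _ (diffX (f := fun x t => px u x t * px l x t) (hu1.mul hl1) x t)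
        (diffX (f := fun x t => u x t * px (px l) x t) (hu.mul hl2) x t)
    have e5 : px (fun x t => px u x t * px l x t) x t
        = px (px u) x t * px l x t + px u x t * px (px l) x t :=
      px_mul _ _ (diffX hu1 x t) (diffX hl1 x t)
    have e6 : px (fun x t => u x t * px (px l) x t) x t
        = px u x t * px (px l) x t + u x t * px (px (px l)) x t :=
      px_mul _ _ (diffX hu x t) (diffX hl2 x t)
    rw [e1, e2, e3, e4, e5, e6]
  -- q_x expanded
  have Cq : ∀ x t, px (fun x t => px (px l) x t / px l x t) x t
      = (px (px (px l)) x t * px l x t - px (px l) x t * px (px l) x t) / (px l x t) ^ 2 :=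
    fun x t => px_div _ _ (diffX hl2 x t) (diffX hl1 x t) (hlx x t)
  -- (4) pt q = -u_xx - u_x q - u q_x
  have C4 : ∀ x t, pt (fun x t => px (px l) x t / px l x t) x t
      = -(px (px u) x t) - px u x t * (px (px l) x t / px l x t)
          - u x t * px (fun x t => px (px l) x t / px l x t) x t := by
    intro x t
    have e1 : pt (fun x t => px (px l) x t / px l x t) x t
        = (pt (px (px l)) x t * px l x t - px (px l) x t * pt (px l) x t) / (px l x t) ^ 2 :=
      pt_div _ _ (diffT hl2 x t) (diffT hl1 x t) (hlx x t)
    have h0 := hlx x t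
    rw [e1, C3 x t, C2 x t, Cq x t]
    field_simp
    ring
  -- (5) pt q_x
  have C5 : ∀ x t, pt (px (fun x t => px (px l) x t / px l x t)) x t
      = -(px (px (px u)) x t)
        - (px (px u) x t * (px (px l) x t / px l x t)
            + px u x t * px (fun x t => px (px l) x t / px l x t) x t)
        - (px u x t * px (fun x t => px (px l) x t / px l x t) x t
            + u x t * px (px (fun x t => px (px l) x t / px l x t)) x t) := by
    intro x t
    have e1 : pt (px (fun x t => px (px l) x t / px l x t)) x t
        = px (pt (fun x t => px (px l) x t / px l x t)) x t := pt_px_comm hq x t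
    have e2 : px (pt (fun x t => px (px l) x t / px l x t)) x t
        = px (fun x t => -(px (px u) x t) - px u x t * (px (px l) x t / px l x t)
            - u x t * px (fun x t => px (px l) x t / px l x t) x t) x t :=
      px_congr C4 x t
    have e3 : px (fun x t => -(px (px u) x t) - px u x t * (px (px l) x t / px l x t)
          - u x t * px (fun x t => px (px l) x t / px l x t) x t) x t
        = px (fun x t => -(px (px u) x t) - px u x t * (px (px l) x t / px l x t)) x t
          - px (fun x t => u x t * px (fun x t => px (px l) x t / px l x t) x t) x t :=
      px_sub _ _
        (diffX (f := fun x t => -(px (px u) x t) - px u x t * (px (px l) x t / px l x t))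
          ((hu2.neg).sub (hu1.mul hq)) x t)
        (diffX (f := fun x t => u x t * px (fun x t => px (px l) x t / px l x t) x t)
          (hu.mul hq1) x t)
    have e4 : px (fun x t => -(px (px u) x t) - px u x t * (px (px l) x t / px l x t)) x t
        = px (fun x t => -(px (px u) x t)) x t
          - px (fun x t => px u x t * (px (px l) x t / px l x t)) x t :=
      px_sub _ _ (diffX (f := fun x t => -(px (px u) x t)) hu2.neg x t)
        (diffX (f := fun x t => px u x t * (px (px l) x t / px l x t)) (hu1.mul hq) x t)
    have e5 : px (fun x t => -(px (px u) x t)) x t = -(px (px (px u)) x t) :=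
      px_neg (px (px u)) x t
    have e6 : px (fun x t => px u x t * (px (px l) x t / px l x t)) x t
        = px (px u) x t * (px (px l) x t / px l x t)
          + px u x t * px (fun x t => px (px l) x t / px l x t) x t :=
      px_mul _ _ (diffX hu1 x t)
      (diffX (f := fun x t => px (px l) x t / px l x t) hq x t)
    have e7 : px (fun x t => u x t * px (fun x t => px (px l) x t / px l x t) x t) x t
        = px u x t * px (fun x t => px (px l) x t / px l x t) x t
          + u x t * px (px (fun x t => px (px l) x t / px l x t)) x t :=
      px_mul _ _ (diffX hu x t)
      (diffX (f := px (fun x t => px (px l) x t / px l x t)) hq1 x t)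
    rw [e1, e2, e3, e4, e5, e6, e7]
  -- (6) pt pr from h3
  have C6 : ∀ x t, pt pr x t
      = -((px pr x t * u x t + pr x t * px u x t)
          - (a / 2 * px (px (px u)) x t * px l x t
              - a / 2 * px (px u) x t * px (px l) x t) / (px l x t) ^ 2) := by
    intro x t
    have e0 : pt pr x t
        = -(px (fun x t => pr x t * u x t - a / 2 * px (px u) x t / px l x t) x t) := by
      have := h3 x t; linarith
    have e1 : px (fun x t => pr x t * u x t - a / 2 * px (px u) x t / px l x t) x t
        = px (fun x t => pr x t * u x t) x t
          - px (fun x t => a / 2 * px (px u) x t / px l x t) x t :=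
      px_sub _ _ (diffX (f := fun x t => pr x t * u x t) (hpr.mul hu) x t)
        (diffX (f := fun x t => a / 2 * px (px u) x t / px l x t)
          ((contDiff_const.mul hu2).div hl1 hlx') x t)
    have e2 : px (fun x t => pr x t * u x t) x t
        = px pr x t * u x t + pr x t * px u x t :=
      px_mul _ _ (diffX hpr x t) (diffX hu x t)
    have e3 : px (fun x t => a / 2 * px (px u) x t / px l x t) x t
        = (px (fun x t => a / 2 * px (px u) x t) x t * px l x t
            - a / 2 * px (px u) x t * px (px l) x t) / (px l x t) ^ 2 :=
      px_div _ _ (diffX (f := fun x t => a / 2 * px (px u) x t) (contDiff_const.mul hu2) x t)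
        (diffX hl1 x t) (hlx x t)
    have e4 : px (fun x t => a / 2 * px (px u) x t) x t = a / 2 * px (px (px u)) x t :=
      px_const_mul (a / 2) (px (px u)) x t
    rw [e0, e1, e2, e3, e4]
  intro x t
  have h0 := hlx x t
  -- time derivative of eq (i)
  have EtL : pt (fun x t => α * u x t - β * px (px u) x t) x t
      = α * pt u x t - β * pt (px (px u)) x t := by
    have e1 : pt (fun x t => α * u x t - β * px (px u) x t) x t
        = pt (fun x t => α * u x t) x t - pt (fun x t => β * px (px u) x t) x t :=
      pt_sub _ _ (diffT (f := fun x t => α * u x t) (contDiff_const.mul hu) x t)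
        (diffT (f := fun x t => β * px (px u) x t) (contDiff_const.mul hu2) x t)
    have e2 : pt (fun x t => α * u x t) x t = α * pt u x t := pt_const_mul α u x t
    have e3 : pt (fun x t => β * px (px u) x t) x t = β * pt (px (px u)) x t :=
      pt_const_mul β (px (px u)) x t
    rw [e1, e2, e3]
  have EtR : pt (fun x t => -(pr x t) * px l x t
        + a / 2 * px (fun x t => px (px l) x t / px l x t) x t) x t
      = (-(pt pr x t) * px l x t + -(pr x t) * pt (px l) x t)
        + a / 2 * pt (px (fun x t => px (px l) x t / px l x t)) x t := by
    have e1 : pt (fun x t => -(pr x t) * px l x t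
          + a / 2 * px (fun x t => px (px l) x t / px l x t) x t) x t
        = pt (fun x t => -(pr x t) * px l x t) x t
          + pt (fun x t => a / 2 * px (fun x t => px (px l) x t / px l x t) x t) x t :=
      pt_add _ _ (diffT (f := fun x t => -(pr x t) * px l x t) ((hpr.neg).mul hl1) x t)
        (diffT (f := fun x t => a / 2 * px (fun x t => px (px l) x t / px l x t) x t)
          (contDiff_const.mul hq1) x t)
    have e2 : pt (fun x t => -(pr x t) * px l x t) x t
        = pt (fun x t => -(pr x t)) x t * px l x t + -(pr x t) * pt (px l) x t :=
      pt_mul _ _ (diffT (f := fun x t => -(pr x t)) hpr.neg x t) (diffT hl1 x t)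
    have e3 : pt (fun x t => -(pr x t)) x t = -(pt pr x t) := pt_neg pr x t
    have e4 : pt (fun x t => a / 2 * px (fun x t => px (px l) x t / px l x t) x t) x t
        = a / 2 * pt (px (fun x t => px (px l) x t / px l x t)) x t :=
      pt_const_mul (a / 2) (px (fun x t => px (px l) x t / px l x t)) x t
    rw [e1, e2, e3, e4]
  have Elink : pt (fun x t => α * u x t - β * px (px u) x t) x t
      = pt (fun x t => -(pr x t) * px l x t
          + a / 2 * px (fun x t => px (px l) x t / px l x t) x t) x t :=
    pt_congr h1 x t
  have Et : α * pt u x t - β * pt (px (px u)) x t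
      = px pr x t * u x t * px l x t + 2 * pr x t * px u x t * px l x t
        + pr x t * u x t * px (px l) x t - a * px (px (px u)) x t
        - a * px u x t * px (fun x t => px (px l) x t / px l x t) x t
        - a / 2 * u x t * px (px (fun x t => px (px l) x t / px l x t)) x t := by
    rw [← EtL, Elink, EtR, C6 x t, C2 x t, C5 x t]
    field_simp
    ring
  -- spatial derivative of eq (i)
  have ExL : px (fun x t => α * u x t - β * px (px u) x t) x t
      = α * px u x t - β * px (px (px u)) x t := by
    have e1 : px (fun x t => α * u x t - β * px (px u) x t) x t
        = px (fun x t => α * u x t) x t - px (fun x t => β * px (px u) x t) x t :=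
      px_sub _ _ (diffX (f := fun x t => α * u x t) (contDiff_const.mul hu) x t)
        (diffX (f := fun x t => β * px (px u) x t) (contDiff_const.mul hu2) x t)
    have e2 : px (fun x t => α * u x t) x t = α * px u x t := px_const_mul α u x t
    have e3 : px (fun x t => β * px (px u) x t) x t = β * px (px (px u)) x t :=
      px_const_mul β (px (px u)) x t
    rw [e1, e2, e3]
  have ExR : px (fun x t => -(pr x t) * px l x t
        + a / 2 * px (fun x t => px (px l) x t / px l x t) x t) x t
      = (-(px pr x t) * px l x t + -(pr x t) * px (px l) x t)
        + a / 2 * px (px (fun x t => px (px l) x t / px l x t)) x t := by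
    have e1 : px (fun x t => -(pr x t) * px l x t
          + a / 2 * px (fun x t => px (px l) x t / px l x t) x t) x t
        = px (fun x t => -(pr x t) * px l x t) x t
          + px (fun x t => a / 2 * px (fun x t => px (px l) x t / px l x t) x t) x t :=
      px_add _ _ (diffX (f := fun x t => -(pr x t) * px l x t) ((hpr.neg).mul hl1) x t)
        (diffX (f := fun x t => a / 2 * px (fun x t => px (px l) x t / px l x t) x t)
          (contDiff_const.mul hq1) x t)
    have e2 : px (fun x t => -(pr x t) * px l x t) x t
        = px (fun x t => -(pr x t)) x t * px l x t + -(pr x t) * px (px l) x t :=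
      px_mul _ _ (diffX (f := fun x t => -(pr x t)) hpr.neg x t) (diffX hl1 x t)
    have e3 : px (fun x t => -(pr x t)) x t = -(px pr x t) := px_neg pr x t
    have e4 : px (fun x t => a / 2 * px (fun x t => px (px l) x t / px l x t) x t) x t
        = a / 2 * px (px (fun x t => px (px l) x t / px l x t)) x t :=
      px_const_mul (a / 2) (px (fun x t => px (px l) x t / px l x t)) x t
    rw [e1, e2, e3, e4]
  have Exlink : px (fun x t => α * u x t - β * px (px u) x t) x t
      = px (fun x t => -(pr x t) * px l x t
          + a / 2 * px (fun x t => px (px l) x t / px l x t) x t) x t :=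
    px_congr h1 x t
  have Ex : α * px u x t - β * px (px (px u)) x t
      = (-(px pr x t) * px l x t + -(pr x t) * px (px l) x t)
        + a / 2 * px (px (fun x t => px (px l) x t / px l x t)) x t := by
    rw [← ExL, Exlink, ExR]
  linear_combination Et + u x t * Ex + 2 * px u x t * h1 x t
end

section
/- Fix real parameters α, β ≥ 0. Let u, l, π : ℝ × ℝ → ℝ be smooth with u(·,t), π(·,t) 2π-periodic, l(x+2π,t) = l(x,t) + 2π, and l_x > 0 everywhere, and let a, λ, θ : ℝ → ℝ be smooth functions of t. Assume that for all (x,t): (a) λ'(t) = 0; (b) a(t) = λ(t); (c) θ'(t) = a(t) − (1/2)∫₀^{2π} u_x l_xx/l_x dx; (d) αu − β u_xx = −π l_x + (λ/2) ∂_x(l_xx/l_x); (e) l_t + u l_x = 0; (f) π_t + ∂_x(π u − (λ/2) u_xx/l_x) = 0. Then a'(t) = 0 and u satisfies α(u_t + 3 u u_x) − β(u_xxt + 2 u_x u_xx + u u_xxx) + a u_xxx = 0 at every point, where a denotes the constant value of a(t). -/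
namespace VB

def Sm (f : ℝ → ℝ → ℝ) : Prop := ContDiff ℝ (⊤ : ℕ∞) (fun p : ℝ × ℝ => f p.1 p.2)

variable {f g : ℝ → ℝ → ℝ} {cf : ℝ → ℝ} {c : ℝ}

lemma Sm.hasDerivAt_x (hf : Sm f) (x t : ℝ) :
    HasDerivAt (fun y => f y t)
      (fderiv ℝ (fun p : ℝ × ℝ => f p.1 p.2) (x, t) (1, 0)) x := by
  have h1 : HasDerivAt (fun y : ℝ => ((y, t) : ℝ × ℝ)) ((1 : ℝ), (0 : ℝ)) x :=
    (hasDerivAt_id x).prodMk (hasDerivAt_const x t)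
  have h2 := ((hf.differentiable (by simp)) (x, t)).hasFDerivAt
  exact h2.comp_hasDerivAt x h1

lemma Sm.hasDerivAt_t (hf : Sm f) (x t : ℝ) :
    HasDerivAt (fun s => f x s)
      (fderiv ℝ (fun p : ℝ × ℝ => f p.1 p.2) (x, t) (0, 1)) t := by
  have h1 : HasDerivAt (fun s : ℝ => ((x, s) : ℝ × ℝ)) ((0 : ℝ), (1 : ℝ)) t :=
    (hasDerivAt_const t x).prodMk (hasDerivAt_id t)
  have h2 := ((hf.differentiable (by simp)) (x, t)).hasFDerivAt
  exact h2.comp_hasDerivAt t h1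

lemma Sm.dx (hf : Sm f) (x t : ℝ) : DifferentiableAt ℝ (fun y => f y t) x :=
  (hf.hasDerivAt_x x t).differentiableAt

lemma Sm.dt (hf : Sm f) (x t : ℝ) : DifferentiableAt ℝ (fun s => f x s) t :=
  (hf.hasDerivAt_t x t).differentiableAt

lemma px_eq (hf : Sm f) (x t : ℝ) :
    px f x t = fderiv ℝ (fun p : ℝ × ℝ => f p.1 p.2) (x, t) (1, 0) :=
  (hf.hasDerivAt_x x t).deriv

lemma pt_eq (hf : Sm f) (x t : ℝ) :
    pt f x t = fderiv ℝ (fun p : ℝ × ℝ => f p.1 p.2) (x, t) (0, 1) :=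
  (hf.hasDerivAt_t x t).deriv

lemma Sm.px (hf : Sm f) : Sm (px f) := by
  have h : (fun p : ℝ × ℝ => _root_.px f p.1 p.2)
      = fun p : ℝ × ℝ => fderiv ℝ (fun q : ℝ × ℝ => f q.1 q.2) p ((1 : ℝ), (0 : ℝ)) := by
    funext p
    simpa using px_eq hf p.1 p.2
  unfold Sm
  rw [h]
  exact (hf.fderiv_right (by simp)).clm_apply contDiff_const

lemma Sm.pt (hf : Sm f) : Sm (pt f) := by
  have h : (fun p : ℝ × ℝ => _root_.pt f p.1 p.2)
      = fun p : ℝ × ℝ => fderiv ℝ (fun q : ℝ × ℝ => f q.1 q.2) p ((0 : ℝ), (1 : ℝ)) := by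
    funext p
    simpa using pt_eq hf p.1 p.2
  unfold Sm
  rw [h]
  exact (hf.fderiv_right (by simp)).clm_apply contDiff_const

lemma pt_px_comm (hf : Sm f) (x t : ℝ) : pt (px f) x t = px (pt f) x t := by
  set F : ℝ × ℝ → ℝ := fun p => f p.1 p.2 with hF
  have hFd : Differentiable ℝ F := hf.differentiable (by simp)
  have hG : ContDiff ℝ (⊤ : ℕ∞) (fderiv ℝ F) := hf.fderiv_right (by simp)
  have hGd : Differentiable ℝ (fderiv ℝ F) := hG.differentiable (by simp)
  have hpx : (fun p : ℝ × ℝ => _root_.px f p.1 p.2)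
      = fun p => fderiv ℝ F p ((1 : ℝ), (0 : ℝ)) := by
    funext p; simpa using px_eq hf p.1 p.2
  have hpt : (fun p : ℝ × ℝ => _root_.pt f p.1 p.2)
      = fun p => fderiv ℝ F p ((0 : ℝ), (1 : ℝ)) := by
    funext p; simpa using pt_eq hf p.1 p.2
  have hsymm := second_derivative_symmetric (f := F) (f' := fderiv ℝ F)
    (f'' := fderiv ℝ (fderiv ℝ F) (x, t))
    (fun y => (hFd y).hasFDerivAt) ((hGd (x, t)).hasFDerivAt)
  have h1 : pt (px f) x t = fderiv ℝ (fderiv ℝ F) (x, t) ((0 : ℝ), (1 : ℝ)) ((1 : ℝ), (0 : ℝ)) := by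
    rw [pt_eq hf.px x t, hpx,
      fderiv_clm_apply (hGd (x, t)) (differentiableAt_const _)]
    simp
  have h2 : px (pt f) x t = fderiv ℝ (fderiv ℝ F) (x, t) ((1 : ℝ), (0 : ℝ)) ((0 : ℝ), (1 : ℝ)) := by
    rw [px_eq hf.pt x t, hpt,
      fderiv_clm_apply (hGd (x, t)) (differentiableAt_const _)]
    simp
  rw [h1, h2, hsymm]

/-! ### closure of `Sm` under algebra -/

lemma Sm.add (hf : Sm f) (hg : Sm g) : Sm (fun x t => f x t + g x t) := ContDiff.add hf hg
lemma Sm.sub (hf : Sm f) (hg : Sm g) : Sm (fun x t => f x t - g x t) := ContDiff.sub hf hg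
lemma Sm.mul (hf : Sm f) (hg : Sm g) : Sm (fun x t => f x t * g x t) := ContDiff.mul hf hg
lemma Sm.neg (hf : Sm f) : Sm (fun x t => -(f x t)) := ContDiff.neg hf
lemma Sm.div (hf : Sm f) (hg : Sm g) (h0 : ∀ x t, g x t ≠ 0) :
    Sm (fun x t => f x t / g x t) := ContDiff.div hf hg (fun p => h0 p.1 p.2)
lemma Sm.cmul (c : ℝ) (hf : Sm f) : Sm (fun x t => c * f x t) := ContDiff.mul contDiff_const hf
lemma Sm.tmul (hc : ContDiff ℝ (⊤ : ℕ∞) cf) (hf : Sm f) : Sm (fun x t => cf t * f x t) :=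
  ContDiff.mul (hc.comp contDiff_snd) hf

/-! ### pointwise rules for `px` -/

lemma px_congr (h : ∀ x t, f x t = g x t) (x t : ℝ) : px f x t = px g x t := by
  unfold _root_.px
  congr 1
  funext y
  exact h y t

lemma pt_congr (h : ∀ x t, f x t = g x t) (x t : ℝ) : pt f x t = pt g x t := by
  unfold _root_.pt
  congr 1
  funext s
  exact h x s

lemma px_add (hf : Sm f) (hg : Sm g) (x t : ℝ) :
    px (fun x t => f x t + g x t) x t = px f x t + px g x t :=
  deriv_add (hf.dx x t) (hg.dx x t)

lemma px_sub (hf : Sm f) (hg : Sm g) (x t : ℝ) :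
    px (fun x t => f x t - g x t) x t = px f x t - px g x t :=
  deriv_sub (hf.dx x t) (hg.dx x t)

lemma px_mul (hf : Sm f) (hg : Sm g) (x t : ℝ) :
    px (fun x t => f x t * g x t) x t = px f x t * g x t + f x t * px g x t :=
  deriv_mul (hf.dx x t) (hg.dx x t)

lemma px_neg (x t : ℝ) :
    px (fun x t => -(f x t)) x t = -(px f x t) :=
  deriv.neg

lemma px_div (hf : Sm f) (hg : Sm g) (x t : ℝ) (h0 : g x t ≠ 0) :
    px (fun x t => f x t / g x t) x t
      = (px f x t * g x t - f x t * px g x t) / (g x t) ^ 2 :=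
  deriv_div (hf.dx x t) (hg.dx x t) h0

lemma px_cmul (hf : Sm f) (x t : ℝ) :
    px (fun x t => c * f x t) x t = c * px f x t :=
  deriv_const_mul c (hf.dx x t)

lemma px_tmul (hf : Sm f) (x t : ℝ) :
    px (fun x t => cf t * f x t) x t = cf t * px f x t :=
  deriv_const_mul (cf t) (hf.dx x t)

lemma pt_add (hf : Sm f) (hg : Sm g) (x t : ℝ) :
    pt (fun x t => f x t + g x t) x t = pt f x t + pt g x t :=
  deriv_add (hf.dt x t) (hg.dt x t)

lemma pt_sub (hf : Sm f) (hg : Sm g) (x t : ℝ) :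
    pt (fun x t => f x t - g x t) x t = pt f x t - pt g x t :=
  deriv_sub (hf.dt x t) (hg.dt x t)

lemma pt_mul (hf : Sm f) (hg : Sm g) (x t : ℝ) :
    pt (fun x t => f x t * g x t) x t = pt f x t * g x t + f x t * pt g x t :=
  deriv_mul (hf.dt x t) (hg.dt x t)

lemma pt_neg (x t : ℝ) :
    pt (fun x t => -(f x t)) x t = -(pt f x t) :=
  deriv.neg

lemma pt_div (hf : Sm f) (hg : Sm g) (x t : ℝ) (h0 : g x t ≠ 0) :
    pt (fun x t => f x t / g x t) x t
      = (pt f x t * g x t - f x t * pt g x t) / (g x t) ^ 2 :=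
  deriv_div (hf.dt x t) (hg.dt x t) h0

lemma pt_cmul (hf : Sm f) (x t : ℝ) :
    pt (fun x t => c * f x t) x t = c * pt f x t :=
  deriv_const_mul c (hf.dt x t)

lemma pt_tmul (hc : ContDiff ℝ (⊤ : ℕ∞) cf) (hf : Sm f) (x t : ℝ) :
    pt (fun x t => cf t * f x t) x t = deriv cf t * f x t + cf t * pt f x t :=
  deriv_fun_mul ((hc.differentiable (by simp)) t) (hf.dt x t)

end VB

open VB

/-- The Euler–Lagrange equations (a)–(f) of the augmented Clebsch action on the
Virasoro–Bott group imply `a' = 0` and the Euler–Poincaré family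
`α(u_t + 3uu_x) − β(u_xxt + 2u_xu_xx + uu_xxx) + a u_xxx = 0`. -/
theorem stmt2 (α β : ℝ) (hα : 0 ≤ α) (hβ : 0 ≤ β)
    (u l pr : ℝ → ℝ → ℝ) (a lam θ : ℝ → ℝ)
    (hu : ContDiff ℝ (⊤ : ℕ∞) (fun p : ℝ × ℝ => u p.1 p.2))
    (hl : ContDiff ℝ (⊤ : ℕ∞) (fun p : ℝ × ℝ => l p.1 p.2))
    (hpr : ContDiff ℝ (⊤ : ℕ∞) (fun p : ℝ × ℝ => pr p.1 p.2))
    (ha : ContDiff ℝ (⊤ : ℕ∞) a) (hlam : ContDiff ℝ (⊤ : ℕ∞) lam) (hθ : ContDiff ℝ (⊤ : ℕ∞) θ)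
    (huper : ∀ x t : ℝ, u (x + 2 * Real.pi) t = u x t)
    (hprper : ∀ x t : ℝ, pr (x + 2 * Real.pi) t = pr x t)
    (hlper : ∀ x t : ℝ, l (x + 2 * Real.pi) t = l x t + 2 * Real.pi)
    (hlx : ∀ x t : ℝ, 0 < px l x t)
    (heqa : ∀ t : ℝ, deriv lam t = 0)
    (heqb : ∀ t : ℝ, a t = lam t)
    (heqc : ∀ t : ℝ, deriv θ t
        = a t - (1 / 2) * ∫ x in (0:ℝ)..(2 * Real.pi),
            px u x t * px (px l) x t / px l x t)
    (heqd : ∀ x t : ℝ, α * u x t - β * px (px u) x t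
        = -(pr x t) * px l x t
          + (lam t / 2) * px (fun x t => px (px l) x t / px l x t) x t)
    (heqe : ∀ x t : ℝ, pt l x t + u x t * px l x t = 0)
    (heqf : ∀ x t : ℝ, pt pr x t
        + px (fun x t => pr x t * u x t - (lam t / 2) * px (px u) x t / px l x t) x t = 0) :
    (∀ t : ℝ, deriv a t = 0) ∧
    (∀ x t : ℝ,
      α * (pt u x t + 3 * u x t * px u x t)
        - β * (pt (px (px u)) x t + 2 * px u x t * px (px u) x t
            + u x t * px (px (px u)) x t)
        + a t * px (px (px u)) x t = 0) := by
  have hSu : Sm u := hu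
  have hSl : Sm l := hl
  have hSpr : Sm pr := hpr
  have hSu1 : Sm (px u) := hSu.px
  have hSu2 : Sm (px (px u)) := hSu1.px
  have hSu3 : Sm (px (px (px u))) := hSu2.px
  have hSl1 : Sm (px l) := hSl.px
  have hSl2 : Sm (px (px l)) := hSl1.px
  have hSl3 : Sm (px (px (px l))) := hSl2.px
  have hne : ∀ x t : ℝ, px l x t ≠ 0 := fun x t => (hlx x t).ne'
  have hlam2 : ContDiff ℝ (⊤ : ℕ∞) (fun s => lam s / 2) := hlam.div_const 2
  have hdlam2 : ∀ t : ℝ, deriv (fun s => lam s / 2) t = 0 := by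
    intro t
    rw [deriv_div_const, heqa t, zero_div]
  set Q : ℝ → ℝ → ℝ := fun x t => px (px l) x t / px l x t with hQdef
  have hSQ : Sm Q := hSl2.div hSl1 hne
  have hSQ1 : Sm (px Q) := hSQ.px
  refine ⟨fun t => by rw [funext heqb]; exact heqa t, ?_⟩
  intro x t
  -- (e) rewritten
  have F0 : ∀ x t : ℝ, pt l x t = -(u x t * px l x t) := fun x t => by
    have h := heqe x t; linarith
  -- time derivative of l_x
  have F1 : ∀ x t : ℝ, pt (px l) x t
      = -(px u x t * px l x t + u x t * px (px l) x t) := by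
    intro x t
    rw [pt_px_comm hSl x t, px_congr F0 x t, px_neg, px_mul hSu hSl1 x t]
  -- time derivative of l_xx
  have F2 : ∀ x t : ℝ, pt (px (px l)) x t
      = -((px (px u) x t * px l x t + px u x t * px (px l) x t)
          + (px u x t * px (px l) x t + u x t * px (px (px l)) x t)) := by
    intro x t
    rw [pt_px_comm hSl1 x t, px_congr F1 x t, px_neg,
      px_add (hSu1.mul hSl1) (hSu.mul hSl2) x t,
      px_mul hSu1 hSl1 x t, px_mul hSu hSl2 x t]
  -- space derivative of Q
  have FQx : ∀ x t : ℝ, px Q x t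
      = (px (px (px l)) x t * px l x t - px (px l) x t * px (px l) x t)
        / (px l x t) ^ 2 := by
    intro x t
    rw [hQdef]
    exact px_div hSl2 hSl1 x t (hne x t)
  -- time derivative of Q
  have FQt : ∀ x t : ℝ, pt Q x t
      = (pt (px (px l)) x t * px l x t - px (px l) x t * pt (px l) x t)
        / (px l x t) ^ 2 := by
    intro x t
    rw [hQdef]
    exact pt_div hSl2 hSl1 x t (hne x t)
  have hQval : ∀ x t : ℝ, Q x t = px (px l) x t / px l x t := fun x t => by rw [hQdef]
  -- key transport identity for Q
  have FG : ∀ x t : ℝ, pt Q x t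
      = -(px (px u) x t) - (px u x t * Q x t + u x t * px Q x t) := by
    intro x t
    rw [FQt x t, F1 x t, F2 x t, FQx x t, hQval x t]
    have h0 := hne x t
    field_simp
    ring
  -- time derivative of px Q
  have F4 : pt (px Q) x t
      = -(px (px (px u)) x t)
        - ((px (px u) x t * Q x t + px u x t * px Q x t)
          + (px u x t * px Q x t + u x t * px (px Q) x t)) := by
    rw [pt_px_comm hSQ x t, px_congr FG x t,
      px_sub hSu2.neg ((hSu1.mul hSQ).add (hSu.mul hSQ1)) x t,
      px_neg, px_add (hSu1.mul hSQ) (hSu.mul hSQ1) x t,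
      px_mul hSu1 hSQ x t, px_mul hSu hSQ1 x t]
  -- equation (f): value of pt pr
  have F5 : pt pr x t
      = -((px pr x t * u x t + pr x t * px u x t)
          - (lam t / 2 * px (px (px u)) x t * px l x t
              - lam t / 2 * px (px u) x t * px (px l) x t) / (px l x t) ^ 2) := by
    have h := heqf x t
    rw [px_sub (hSpr.mul hSu) ((Sm.tmul hlam2 hSu2).div hSl1 hne) x t,
      px_mul hSpr hSu x t,
      px_div (Sm.tmul hlam2 hSu2) hSl1 x t (hne x t),
      px_tmul hSu2 x t] at h
    linarith
  -- cleared version of F5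
  have F5' : pt pr x t * (px l x t) ^ 2
      = -((px pr x t * u x t + pr x t * px u x t)) * (px l x t) ^ 2
        + (lam t / 2 * px (px (px u)) x t * px l x t
            - lam t / 2 * px (px u) x t * px (px l) x t) := by
    rw [F5]
    have h0 := hne x t
    field_simp
    ring
  -- cleared value of Q
  have R2' : Q x t * px l x t = px (px l) x t := by
    rw [hQval x t]
    exact div_mul_cancel₀ _ (hne x t)
  -- x-derivative of equation (d)
  have hA : px (fun x t => α * u x t - β * px (px u) x t) x t
      = α * px u x t - β * px (px (px u)) x t := by
    rw [px_sub (Sm.cmul α hSu) (Sm.cmul β hSu2) x t, px_cmul hSu x t, px_cmul hSu2 x t]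
  have hAt : pt (fun x t => α * u x t - β * px (px u) x t) x t
      = α * pt u x t - β * pt (px (px u)) x t := by
    rw [pt_sub (Sm.cmul α hSu) (Sm.cmul β hSu2) x t, pt_cmul hSu x t, pt_cmul hSu2 x t]
  have E2 : α * px u x t - β * px (px (px u)) x t
      = -(px pr x t) * px l x t + -(pr x t) * px (px l) x t
        + lam t / 2 * px (px Q) x t := by
    rw [← hA, px_congr heqd x t,
      px_add (hSpr.neg.mul hSl1) (Sm.tmul hlam2 hSQ1) x t,
      px_mul hSpr.neg hSl1 x t, px_neg, px_tmul hSQ1 x t]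
  have E3 : α * pt u x t - β * pt (px (px u)) x t
      = -(pt pr x t) * px l x t + -(pr x t) * pt (px l) x t
        + lam t / 2 * pt (px Q) x t := by
    rw [← hAt, pt_congr heqd x t,
      pt_add (hSpr.neg.mul hSl1) (Sm.tmul hlam2 hSQ1) x t,
      pt_mul hSpr.neg hSl1 x t, pt_neg, pt_tmul hlam2 hSQ1 x t,
      hdlam2 t]
    ring
  have E1 := heqd x t
  have hB1t := F1 x t
  rw [heqb t]
  refine mul_left_cancel₀ (hne x t) ?_
  linear_combination (px l x t) * E3 + (u x t * px l x t) * E2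
    + (2 * px u x t * px l x t) * E1 - F5'
    - (pr x t * px l x t) * hB1t + (lam t / 2 * px l x t) * F4
    - (lam t / 2 * px (px u) x t) * R2'
end

section
/- Let λ be a real constant and let u, l, π : ℝ → ℝ be smooth functions of one variable x with l'(x) ≠ 0 for all x. Define A(x) := (λ/2) · d/dx[ (−l' · (u l')'' + l'' · (u l')') / (l')² ] + l' · d/dx[ π u − (λ/2) u''/l' ] + π · (u l')', and B(x) := ( λ · (l''/l')' − 2 π l' ) u' + u · d/dx[ (λ/2)(l''/l')' − π l' ] + λ u'''. Then A(x) + B(x) = 0 for all x. -/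
/-- The key algebraic-differential identity `A + B = 0` in the proof that the Clebsch
variational equations imply the Euler–Poincaré equation on the dual of the Virasoro algebra.
Here primes are `deriv`, and `(u l')'` etc. are derivatives of the product `u * l'`. -/
theorem stmt3 (lam : ℝ) (u l pr : ℝ → ℝ)
    (hu : ContDiff ℝ (⊤ : ℕ∞) u) (hl : ContDiff ℝ (⊤ : ℕ∞) l) (hpr : ContDiff ℝ (⊤ : ℕ∞) pr)
    (hl' : ∀ x : ℝ, deriv l x ≠ 0) :
    ∀ x : ℝ,
      ((lam / 2) * deriv (fun y =>
            (-(deriv l y) * deriv (deriv (fun z => u z * deriv l z)) y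
              + deriv (deriv l) y * deriv (fun z => u z * deriv l z) y) / (deriv l y) ^ 2) x
        + deriv l x * deriv (fun y => pr y * u y - (lam / 2) * deriv (deriv u) y / deriv l y) x
        + pr x * deriv (fun z => u z * deriv l z) x)
      + ((lam * deriv (fun y => deriv (deriv l) y / deriv l y) x - 2 * pr x * deriv l x)
            * deriv u x
        + u x * deriv (fun y =>
            (lam / 2) * deriv (fun z => deriv (deriv l) z / deriv l z) y
              - pr y * deriv l y) x
        + lam * deriv (deriv (deriv u)) x) = 0 := by
  intro x
  have hu0 : ContDiff ℝ (⊤:ℕ∞) u := hu.of_le (by simp)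
  have hl0 : ContDiff ℝ (⊤:ℕ∞) l := hl.of_le (by simp)
  have hpr0 : ContDiff ℝ (⊤:ℕ∞) pr := hpr.of_le (by simp)
  have hl1 : ContDiff ℝ (⊤:ℕ∞) (deriv l) := (contDiff_infty_iff_deriv.mp hl0).2
  have hl2 : ContDiff ℝ (⊤:ℕ∞) (deriv (deriv l)) := (contDiff_infty_iff_deriv.mp hl1).2
  have hl3 : ContDiff ℝ (⊤:ℕ∞) (deriv (deriv (deriv l))) := (contDiff_infty_iff_deriv.mp hl2).2
  have hu1 : ContDiff ℝ (⊤:ℕ∞) (deriv u) := (contDiff_infty_iff_deriv.mp hu0).2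
  have hu2 : ContDiff ℝ (⊤:ℕ∞) (deriv (deriv u)) := (contDiff_infty_iff_deriv.mp hu1).2
  have du : Differentiable ℝ u := hu0.differentiable (by simp)
  have du1 : Differentiable ℝ (deriv u) := hu1.differentiable (by simp)
  have du2 : Differentiable ℝ (deriv (deriv u)) := hu2.differentiable (by simp)
  have dl1 : Differentiable ℝ (deriv l) := hl1.differentiable (by simp)
  have dl2 : Differentiable ℝ (deriv (deriv l)) := hl2.differentiable (by simp)
  have dl3 : Differentiable ℝ (deriv (deriv (deriv l))) := hl3.differentiable (by simp)
  have dpr : Differentiable ℝ pr := hpr0.differentiable (by simp)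
  have E1 : deriv (fun z => u z * deriv l z)
      = fun y => deriv u y * deriv l y + u y * deriv (deriv l) y :=
    funext fun y => deriv_mul (du y) (dl1 y)
  have E2 : deriv (fun y => deriv u y * deriv l y + u y * deriv (deriv l) y)
      = fun y => (deriv (deriv u) y * deriv l y + deriv u y * deriv (deriv l) y)
          + (deriv u y * deriv (deriv l) y + u y * deriv (deriv (deriv l)) y) := by
    funext y
    rw [deriv_fun_add (f := fun y => deriv u y * deriv l y) (g := fun y => u y * deriv (deriv l) y)
      ((du1.mul dl1) y) ((du.mul dl2) y), deriv_fun_mul (du1 y) (dl1 y),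
      deriv_fun_mul (du y) (dl2 y)]
  have E3 : deriv (fun z => deriv (deriv l) z / deriv l z)
      = fun y => (deriv (deriv (deriv l)) y * deriv l y - deriv (deriv l) y * deriv (deriv l) y)
          / deriv l y ^ 2 :=
    funext fun y => deriv_div (dl2 y) (dl1 y) (hl' y)
  simp only [E1, E2, E3]
  have Hu : HasDerivAt u (deriv u x) x := (du x).hasDerivAt
  have Hu1 : HasDerivAt (deriv u) (deriv (deriv u) x) x := (du1 x).hasDerivAt
  have Hu2 : HasDerivAt (deriv (deriv u)) (deriv (deriv (deriv u)) x) x := (du2 x).hasDerivAt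
  have Hl1 : HasDerivAt (deriv l) (deriv (deriv l) x) x := (dl1 x).hasDerivAt
  have Hl2 : HasDerivAt (deriv (deriv l)) (deriv (deriv (deriv l)) x) x := (dl2 x).hasDerivAt
  have Hl3 : HasDerivAt (deriv (deriv (deriv l))) (deriv (deriv (deriv (deriv l))) x) x :=
    (dl3 x).hasDerivAt
  have Hp : HasDerivAt pr (deriv pr x) x := (dpr x).hasDerivAt
  have H1 : HasDerivAt (fun y =>
      (-deriv l y * (deriv (deriv u) y * deriv l y + deriv u y * deriv (deriv l) y +
          (deriv u y * deriv (deriv l) y + u y * deriv (deriv (deriv l)) y)) +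
        deriv (deriv l) y * (deriv u y * deriv l y + u y * deriv (deriv l) y)) /
        deriv l y ^ 2) _ x :=
    ((Hl1.neg.mul (((Hu2.mul Hl1).add (Hu1.mul Hl2)).add
        ((Hu1.mul Hl2).add (Hu.mul Hl3)))).add
      (Hl2.mul ((Hu1.mul Hl1).add (Hu.mul Hl2)))).div (Hl1.pow 2) (pow_ne_zero 2 (hl' x))
  have H2 : HasDerivAt (fun y => pr y * u y - lam / 2 * deriv (deriv u) y / deriv l y) _ x :=
    (Hp.mul Hu).sub ((HasDerivAt.const_mul (lam / 2) Hu2).div Hl1 (hl' x))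
  have H5 : HasDerivAt (fun y =>
      lam / 2 * ((deriv (deriv (deriv l)) y * deriv l y -
          deriv (deriv l) y * deriv (deriv l) y) / deriv l y ^ 2) - pr y * deriv l y) _ x :=
    (HasDerivAt.const_mul (lam / 2) (((Hl3.mul Hl1).sub (Hl2.mul Hl2)).div (Hl1.pow 2)
      (pow_ne_zero 2 (hl' x)))).sub (Hp.mul Hl1)
  rw [H1.deriv, H2.deriv, H5.deriv]
  push_cast
  simp only [Pi.add_apply, Pi.mul_apply, Pi.neg_apply, Pi.pow_apply, Pi.sub_apply]
  field_simp [hl' x]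
  ring
end

section
/- Let ψ : ℝ × ℝ → ℝ be smooth with ψ(θ + 2π, t) = ψ(θ, t) + 2π and ψ_θ(θ,t) > 0 for all (θ,t), and let l : ℝ × ℝ → ℝ be its spatial inverse, l(ψ(θ,t),t) = θ and ψ(l(x,t),t) = x. Define u(x,t) := ψ_t(l(x,t), t). Define the Bott cocycle of two such maps φ₁, φ₂ by B(φ₁, φ₂) := (1/2)∫₀^{2π} log( φ₁'(φ₂(x)) · φ₂'(x) ) · ( φ₂''(x)/φ₂'(x) ) dx. Then for every t, the function s ↦ B(ψ(·,s), l(·,t)) is differentiable at s = t and d/ds|_{s=t} B(ψ(·,s), l(·,t)) = (1/2)∫₀^{2π} u_x(x,t) · l_xx(x,t)/l_x(x,t) dx. -/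
open Real MeasureTheory


/-- The Bott cocycle `B(φ₁,φ₂) = (1/2)∫₀^{2π} log(φ₁'(φ₂(x))·φ₂'(x)) · (φ₂''(x)/φ₂'(x)) dx`
of lifts of circle diffeomorphisms. -/
noncomputable def BottCocycle (φ₁ φ₂ : ℝ → ℝ) : ℝ :=
  (1 / 2) * ∫ x in (0:ℝ)..(2 * Real.pi),
    Real.log (deriv φ₁ (φ₂ x) * deriv φ₂ x) * (deriv (deriv φ₂) x / deriv φ₂ x)

lemma hasDerivAt_fst' {F : ℝ × ℝ → ℝ} {θ s : ℝ} (hF : DifferentiableAt ℝ F (θ, s)) :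
    HasDerivAt (fun y => F (y, s)) (fderiv ℝ F (θ, s) (1, 0)) θ := by
  have h1 : HasDerivAt (fun y : ℝ => (y, s)) ((1:ℝ), (0:ℝ)) θ := by
    simpa using (hasDerivAt_id θ).prodMk (hasDerivAt_const θ s)
  exact hF.hasFDerivAt.comp_hasDerivAt θ h1

lemma hasDerivAt_snd' {F : ℝ × ℝ → ℝ} {θ s : ℝ} (hF : DifferentiableAt ℝ F (θ, s)) :
    HasDerivAt (fun r => F (θ, r)) (fderiv ℝ F (θ, s) (0, 1)) s := by
  have h1 : HasDerivAt (fun r : ℝ => (θ, r)) ((0:ℝ), (1:ℝ)) s := by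
    simpa using (hasDerivAt_const s θ).prodMk (hasDerivAt_id s)
  exact hF.hasFDerivAt.comp_hasDerivAt s h1

lemma contDiff_top_deriv {f : ℝ → ℝ} (hf : ContDiff ℝ (⊤ : ℕ∞) f) : ContDiff ℝ (⊤ : ℕ∞) (deriv f) := by
  have h2 : ContDiff ℝ (⊤ : ℕ∞) (fun y => fderiv ℝ f y 1) :=
    (hf.fderiv_right (by simp)).clm_apply contDiff_const
  have : deriv f = fun y => fderiv ℝ f y 1 := funext fun y => (fderiv_apply_one_eq_deriv).symm
  rw [this]; exact h2

lemma contDiff_deriv_of_top {f : ℝ → ℝ} (hf : ContDiff ℝ (⊤ : ℕ∞) f) (n : ℕ) :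
    ContDiff ℝ n (deriv f) := by
  have h1 : ContDiff ℝ (n + 1 : ℕ) f := hf.of_le (by exact_mod_cast le_top)
  have h2 : ContDiff ℝ n (fderiv ℝ f) := h1.fderiv_right (by exact_mod_cast le_rfl)
  have h3 : ContDiff ℝ n (fun y => fderiv ℝ f y 1) := h2.clm_apply contDiff_const
  have : deriv f = fun y => fderiv ℝ f y 1 := funext fun y => (fderiv_apply_one_eq_deriv).symm
  rw [this]; exact h3

/-- second derivative applied lemma -/
lemma fderiv_fderiv_apply {F : ℝ × ℝ → ℝ} (hF : ContDiff ℝ 2 (fderiv ℝ F))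
    (q : ℝ × ℝ) (v w : ℝ × ℝ) :
    fderiv ℝ (fun p => fderiv ℝ F p v) q w = fderiv ℝ (fderiv ℝ F) q w v := by
  have hd : HasFDerivAt (fderiv ℝ F) (fderiv ℝ (fderiv ℝ F) q) q :=
    ((hF.differentiable two_ne_zero) q).hasFDerivAt
  have h := ((ContinuousLinearMap.apply ℝ ℝ v).hasFDerivAt).comp q hd
  have h2 : fderiv ℝ (fun p => fderiv ℝ F p v) q =
      (ContinuousLinearMap.apply ℝ ℝ v).comp (fderiv ℝ (fderiv ℝ F) q) := h.fderiv
  rw [h2]; rfl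


/-- For a smooth flow `ψ` of circle diffeomorphism lifts with inverse map `l` and Eulerian
velocity `u(x,t) = ψ_t(l(x,t),t)`, the map `s ↦ B(ψ(·,s), l(·,t))` is differentiable at
`s = t` with derivative `(1/2)∫₀^{2π} u_x l_xx / l_x dx`. -/
theorem stmt7 (ψ l : ℝ → ℝ → ℝ)
    (hψ : ContDiff ℝ (⊤ : ℕ∞) (fun p : ℝ × ℝ => ψ p.1 p.2))
    (hl : ContDiff ℝ (⊤ : ℕ∞) (fun p : ℝ × ℝ => l p.1 p.2))
    (hper : ∀ θ t : ℝ, ψ (θ + 2 * Real.pi) t = ψ θ t + 2 * Real.pi)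
    (hpos : ∀ θ t : ℝ, 0 < px ψ θ t)
    (hinv1 : ∀ θ t : ℝ, l (ψ θ t) t = θ)
    (hinv2 : ∀ x t : ℝ, ψ (l x t) t = x)
    (u : ℝ → ℝ → ℝ)
    (hu : ∀ x t : ℝ, u x t = pt ψ (l x t) t)
    (t : ℝ) :
    HasDerivAt (fun s => BottCocycle (fun θ => ψ θ s) (fun x => l x t))
      ((1 / 2) * ∫ x in (0:ℝ)..(2 * Real.pi),
        px u x t * (px (px l) x t / px l x t)) t := by
  set Fψ : ℝ × ℝ → ℝ := fun p => ψ p.1 p.2 with hFψ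
  have hψd : Differentiable ℝ Fψ := hψ.differentiable (by simp)
  set P2 : ℝ × ℝ → ℝ := fun p => fderiv ℝ Fψ p (1, 0) with hP2def
  set T2 : ℝ × ℝ → ℝ := fun p => fderiv ℝ Fψ p (0, 1) with hT2def
  have hψf : ContDiff ℝ 2 (fderiv ℝ Fψ) :=
    (hψ.of_le (WithTop.coe_le_coe.mpr le_top : (3 : WithTop ℕ∞) ≤ ((⊤ : ℕ∞) : WithTop ℕ∞))).fderiv_right (by norm_num)
  have hP2 : ContDiff ℝ 2 P2 := hψf.clm_apply contDiff_const
  have hT2 : ContDiff ℝ 2 T2 := hψf.clm_apply contDiff_const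
  set Q2 : ℝ × ℝ → ℝ := fun p => fderiv ℝ P2 p (0, 1) with hQ2def
  have hQ2cont : Continuous Q2 :=
    ((hP2.fderiv_right (m := 1) (by norm_num)).clm_apply contDiff_const).continuous
  -- px and pt in terms of P2, T2
  have hpx : ∀ θ s : ℝ, px ψ θ s = P2 (θ, s) := fun θ s =>
    (hasDerivAt_fst' (hψd (θ, s))).deriv
  have hptψ : ∀ θ s : ℝ, pt ψ θ s = T2 (θ, s) := fun θ s =>
    (hasDerivAt_snd' (hψd (θ, s))).deriv
  have hP2pos : ∀ p : ℝ × ℝ, 0 < P2 p := by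
    intro p; have := hpos p.1 p.2; rwa [hpx] at this
  -- the fixed diffeo g = l(·,t)
  set g : ℝ → ℝ := fun x => l x t with hgdef
  have hg : ContDiff ℝ (⊤ : ℕ∞) g := hl.comp (contDiff_id.prodMk contDiff_const)
  set c : ℝ → ℝ := deriv g with hcdef
  set d : ℝ → ℝ := deriv c with hddef
  have hccont : Continuous c := (contDiff_deriv_of_top hg 1).continuous
  have hc2 : ContDiff ℝ (⊤ : ℕ∞) c := contDiff_top_deriv hg
  have hdcont : Continuous d := (contDiff_top_deriv hc2).continuous
  have hgd : ∀ x, HasDerivAt g (c x) x := fun x =>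
    ((hg.differentiable (by simp)) x).hasDerivAt
  -- P2(g x, t) * c x = 1
  have hPg : ∀ x : ℝ, P2 (g x, t) * c x = 1 := by
    intro x
    have h1 : HasDerivAt (fun θ => Fψ (θ, t)) (P2 (g x, t)) (g x) := hasDerivAt_fst' (hψd _)
    have h2 : HasDerivAt (fun y => Fψ (g y, t)) (P2 (g x, t) * c x) x := h1.comp x (hgd x)
    have h3 : (fun y => Fψ (g y, t)) = fun y => y := funext fun y => hinv2 y t
    rw [h3] at h2
    exact h2.unique (hasDerivAt_id x)
  have hcpos : ∀ x : ℝ, 0 < c x := by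
    intro x
    have h1 := hP2pos (g x, t)
    nlinarith [hPg x]
  -- the integrand and its s-derivative
  set F : ℝ → ℝ → ℝ := fun s x => Real.log (P2 (g x, s) * c x) * (d x / c x) with hFdef
  set F' : ℝ → ℝ → ℝ :=
    fun s x => (Q2 (g x, s) * c x) / (P2 (g x, s) * c x) * (d x / c x) with hF'def
  have hprodpos : ∀ s x : ℝ, 0 < P2 (g x, s) * c x := fun s x =>
    mul_pos (hP2pos _) (hcpos x)
  -- rewrite the Bott cocycle
  have key : (fun s => BottCocycle (fun θ => ψ θ s) (fun x => l x t)) =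
      fun s => (1 / 2) * ∫ x in (0:ℝ)..(2 * Real.pi), F s x := by
    funext s
    unfold BottCocycle
    congr 1
    apply intervalIntegral.integral_congr
    intro x _
    have e1 : deriv (fun θ => ψ θ s) (g x) = P2 (g x, s) := hpx (g x) s
    show Real.log (deriv (fun θ => ψ θ s) (g x) * deriv g x) * (deriv (deriv g) x / deriv g x)
      = F s x
    rw [e1]
  rw [key]
  -- joint continuity of F'
  have hgc : Continuous g := hg.continuous
  have hGcont : Continuous (fun q : ℝ × ℝ => F' q.2 q.1) := by
    have hmap : Continuous (fun q : ℝ × ℝ => (g q.1, q.2)) :=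
      (hgc.comp continuous_fst).prodMk continuous_snd
    refine Continuous.mul (Continuous.div ?_ ?_ ?_) ?_
    · exact (hQ2cont.comp hmap).mul (hccont.comp continuous_fst)
    · exact (hP2.continuous.comp hmap).mul (hccont.comp continuous_fst)
    · intro q; exact ne_of_gt (hprodpos q.2 q.1)
    · exact (hdcont.comp continuous_fst).div (hccont.comp continuous_fst)
        (fun q => ne_of_gt (hcpos q.1))
  -- the bound
  obtain ⟨C, hC⟩ := (isCompact_Icc.prod isCompact_Icc :
      IsCompact (Set.Icc (0:ℝ) (2 * Real.pi) ×ˢ Set.Icc (t - 1) (t + 1))).exists_bound_of_continuousOn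
      hGcont.continuousOn
  have hπ : (0:ℝ) ≤ 2 * Real.pi := by positivity
  -- per-s continuity of F s
  have hFscont : ∀ s : ℝ, Continuous (F s) := by
    intro s
    have hmap : Continuous (fun x : ℝ => P2 (g x, s) * c x) :=
      ((hP2.continuous.comp (hgc.prodMk continuous_const)).mul hccont)
    exact (hmap.log (fun x => ne_of_gt (hprodpos s x))).mul
      (hdcont.div hccont fun x => ne_of_gt (hcpos x))
  -- differentiability in s
  have hP2diff : Differentiable ℝ P2 := hP2.differentiable two_ne_zero
  have hdiff : ∀ x s : ℝ, HasDerivAt (fun r => F r x) (F' s x) s := by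
    intro x s
    have h1 : HasDerivAt (fun r => P2 (g x, r)) (Q2 (g x, s)) s :=
      hasDerivAt_snd' (hP2diff (g x, s))
    have h2 := ((h1.mul_const (c x)).log (ne_of_gt (hprodpos s x))).mul_const (d x / c x)
    exact h2
  -- dominated-derivative theorem
  have hmain :=
    (intervalIntegral.hasDerivAt_integral_of_dominated_loc_of_deriv_le
      (F := F) (F' := F') (x₀ := t) (a := (0:ℝ)) (b := 2 * Real.pi)
      (bound := fun _ => C) (μ := volume) (Metric.ball_mem_nhds t one_pos)
      (Filter.Eventually.of_forall fun s => (hFscont s).aestronglyMeasurable)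
      ((hFscont t).intervalIntegrable _ _)
      (((hGcont.comp (continuous_id.prodMk continuous_const)).aestronglyMeasurable :
        AEStronglyMeasurable (fun x : ℝ => F' t x) _))
      (Filter.Eventually.of_forall fun x hx s hs => by
        have hx' : x ∈ Set.Icc (0:ℝ) (2 * Real.pi) := by
          rw [Set.uIoc_of_le hπ] at hx
          exact ⟨le_of_lt hx.1, hx.2⟩
        have hs' : s ∈ Set.Icc (t - 1) (t + 1) := by
          rw [Real.ball_eq_Ioo] at hs
          exact ⟨le_of_lt hs.1, le_of_lt hs.2⟩
        exact hC (x, s) (Set.mk_mem_prod hx' hs'))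
      (intervalIntegrable_const)
      (Filter.Eventually.of_forall fun x _ s _ => hdiff x s)).2
  -- identify the derivative value
  have hval : (∫ x in (0:ℝ)..(2 * Real.pi), F' t x)
      = ∫ x in (0:ℝ)..(2 * Real.pi), px u x t * (px (px l) x t / px l x t) := by
    apply intervalIntegral.integral_congr
    intro x _
    -- px l and px (px l) in terms of c, d
    have hplc : (fun y => px l y t) = c := by
      funext y; simp only [px, hcdef]; rfl
    have hpxl : px l x t = c x := congrFun hplc x
    have hpxxl : px (px l) x t = d x := by
      show deriv (fun y => px l y t) x = d x
      rw [hplc]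
    -- px u x t = c x * Q2 (g x, t)
    have huf : (fun y => u y t) = fun y => T2 (g y, t) := by
      funext y; rw [hu y t, hptψ]
    have hinner : HasDerivAt (fun y => (g y, t)) ((c x, 0) : ℝ × ℝ) x :=
      (hgd x).prodMk (hasDerivAt_const x t)
    have hT2diff : HasFDerivAt T2 (fderiv ℝ T2 (g x, t)) (g x, t) :=
      ((hT2.differentiable two_ne_zero) _).hasFDerivAt
    have hcomp : HasDerivAt (fun y => T2 (g y, t)) (fderiv ℝ T2 (g x, t) (c x, 0)) x :=
      by have := hT2diff.comp_hasDerivAt x hinner; exact this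
    have hpu : px u x t = fderiv ℝ T2 (g x, t) (c x, 0) := by
      show deriv (fun y => u y t) x = _
      rw [huf]; exact hcomp.deriv
    have hsmul : ((c x, 0) : ℝ × ℝ) = c x • ((1:ℝ), (0:ℝ)) := by
      simp [Prod.smul_def]
    have hpu2 : px u x t = c x * fderiv ℝ T2 (g x, t) (1, 0) := by
      rw [hpu, hsmul, (fderiv ℝ T2 (g x, t)).map_smul]; rfl
    -- symmetry of second derivatives
    have hsymm : fderiv ℝ T2 (g x, t) (1, 0) = Q2 (g x, t) := by
      have e1 : fderiv ℝ T2 (g x, t) (1, 0)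
          = fderiv ℝ (fderiv ℝ Fψ) (g x, t) (1, 0) (0, 1) :=
        fderiv_fderiv_apply hψf (g x, t) (0, 1) (1, 0)
      have e2 : Q2 (g x, t) = fderiv ℝ (fderiv ℝ Fψ) (g x, t) (0, 1) (1, 0) :=
        fderiv_fderiv_apply hψf (g x, t) (1, 0) (0, 1)
      have e3 := ((hψ.contDiffAt (x := ((g x, t) : ℝ × ℝ))).isSymmSndFDerivAt (by rw [minSmoothness_of_isRCLikeNormedField]; exact WithTop.coe_le_coe.mpr le_top)) ((1:ℝ), (0:ℝ)) ((0:ℝ), (1:ℝ))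
      rw [e1, e2]
      exact e3
    have hc1 := hPg x
    have hcne := ne_of_gt (hcpos x)
    show (Q2 (g x, t) * c x) / (P2 (g x, t) * c x) * (d x / c x)
      = px u x t * (px (px l) x t / px l x t)
    rw [hpxl, hpxxl, hpu2, hsymm, hPg x, div_one]
    ring
  rw [← hval]
  exact hmain.const_mul _
end

section
/- Fix real parameters α, β ≥ 0 and a > 0. Let z = (l, u, π, Δ, Θ, Ξ, Π) : ℝ × ℝ → ℝ⁷ be smooth with Δ nowhere zero, satisfying the seven component equations: (1) π_t + π u_x + u π_x + (a/2)(Π/Δ²) Δ_x − (a/(2Δ)) Π_x = 0; (2) −π l_x − (a/2)(Ξ/Δ²) Δ_x + β Θ_x + (a/(2Δ)) Ξ_x = αu; (3) −l_t − u l_x = 0; (4) −(a/2)(Π/Δ²) l_x + (a/2)(Ξ/Δ²) u_x + (a/(2Δ)) Θ_x = (a/2) Θ Ξ/Δ²; (5) −β u_x − (a/(2Δ)) Δ_x = −β Θ − (a/2) Ξ/Δ; (6) −(a/(2Δ)) u_x = −(a/2) Θ/Δ; (7) (a/(2Δ)) l_x = a/2. Then Δ = l_x, Θ = u_x, Ξ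 = l_xx and Π = u_xx at every point. -/
/-- In the componentwise multisymplectic system (equations (1)–(7) of the proof of
Theorem 3.1), the auxiliary variables are identified with spatial derivatives:
`Δ = l_x`, `Θ = u_x`, `Ξ = l_xx`, `Π = u_xx`. -/
theorem stmt10 (α β a : ℝ) (hα : 0 ≤ α) (hβ : 0 ≤ β) (ha : 0 < a)
    (l u pr Δ Θ Ξ P : ℝ → ℝ → ℝ)
    (hl : ContDiff ℝ (⊤ : ℕ∞) (fun p : ℝ × ℝ => l p.1 p.2))
    (hu : ContDiff ℝ (⊤ : ℕ∞) (fun p : ℝ × ℝ => u p.1 p.2))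
    (hpr : ContDiff ℝ (⊤ : ℕ∞) (fun p : ℝ × ℝ => pr p.1 p.2))
    (hΔ : ContDiff ℝ (⊤ : ℕ∞) (fun p : ℝ × ℝ => Δ p.1 p.2))
    (hΘ : ContDiff ℝ (⊤ : ℕ∞) (fun p : ℝ × ℝ => Θ p.1 p.2))
    (hΞ : ContDiff ℝ (⊤ : ℕ∞) (fun p : ℝ × ℝ => Ξ p.1 p.2))
    (hP : ContDiff ℝ (⊤ : ℕ∞) (fun p : ℝ × ℝ => P p.1 p.2))
    (hΔ0 : ∀ x t : ℝ, Δ x t ≠ 0)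
    (h1 : ∀ x t : ℝ, pt pr x t + pr x t * px u x t + u x t * px pr x t
        + (a / 2) * (P x t / (Δ x t) ^ 2) * px Δ x t
        - (a / (2 * Δ x t)) * px P x t = 0)
    (h2 : ∀ x t : ℝ, -(pr x t) * px l x t - (a / 2) * (Ξ x t / (Δ x t) ^ 2) * px Δ x t
        + β * px Θ x t + (a / (2 * Δ x t)) * px Ξ x t = α * u x t)
    (h3 : ∀ x t : ℝ, -(pt l x t) - u x t * px l x t = 0)
    (h4 : ∀ x t : ℝ, -(a / 2) * (P x t / (Δ x t) ^ 2) * px l x t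
        + (a / 2) * (Ξ x t / (Δ x t) ^ 2) * px u x t
        + (a / (2 * Δ x t)) * px Θ x t = (a / 2) * (Θ x t * Ξ x t / (Δ x t) ^ 2))
    (h5 : ∀ x t : ℝ, -(β * px u x t) - (a / (2 * Δ x t)) * px Δ x t
        = -(β * Θ x t) - (a / 2) * (Ξ x t / Δ x t))
    (h6 : ∀ x t : ℝ, -(a / (2 * Δ x t)) * px u x t = -(a / 2) * (Θ x t / Δ x t))
    (h7 : ∀ x t : ℝ, (a / (2 * Δ x t)) * px l x t = a / 2) :
    ∀ x t : ℝ, Δ x t = px l x t ∧ Θ x t = px u x t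
      ∧ Ξ x t = px (px l) x t ∧ P x t = px (px u) x t := by
  have ha' : a ≠ 0 := ne_of_gt ha
  have hlx : ∀ x t : ℝ, px l x t = Δ x t := by
    intro x t
    have h := h7 x t
    have hd := hΔ0 x t
    field_simp at h
    have := mul_left_cancel₀ ha' (show a * (px l x t * 2) = a * (2 * Δ x t) by rw [h]; ring)
    linarith
  have hux : ∀ x t : ℝ, px u x t = Θ x t := by
    intro x t
    have h := h6 x t
    have hd := hΔ0 x t
    field_simp at h
    linarith
  intro x t
  have hd := hΔ0 x t
  refine ⟨(hlx x t).symm, (hux x t).symm, ?_, ?_⟩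
  · have h := h5 x t
    rw [hux x t] at h
    have hΔx : px Δ x t = Ξ x t := by
      field_simp at h
      exact mul_left_cancel₀ ha' (by linarith)
    have hfun : (fun y => px l y t) = fun y => Δ y t := funext fun y => hlx y t
    show Ξ x t = deriv (fun y => px l y t) x
    rw [hfun]
    exact hΔx.symm
  · have h := h4 x t
    rw [hux x t, hlx x t] at h
    have hΘx : px Θ x t = P x t := by
      field_simp at h
      have hne : a * 8 * (Δ x t) ^ 6 ≠ 0 :=
        mul_ne_zero (mul_ne_zero ha' (by norm_num)) (pow_ne_zero _ hd)
      have h' : a * 8 * (Δ x t) ^ 6 * px Θ x t = a * 8 * (Δ x t) ^ 6 * P x t := by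
        linear_combination (a * 8 * (Δ x t) ^ 5) * h
      exact mul_left_cancel₀ hne h'
    have hfun : (fun y => px u y t) = fun y => Θ y t := funext fun y => hux y t
    show P x t = deriv (fun y => px u y t) x
    rw [hfun]
    exact hΘx.symm
end
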